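/- Let G be a finite connected weighted graph and let p, q, s, t, u be vertices of G with p ≠ q. Then j_u(t,s) = j_u^{G_{pq}}(t,s) + (1/r(p,q))·( j_p(q,u) − j_p(q,t) )·( j_p(q,u) − j_p(q,s) ). -/

import Mathlib

open scoped Classical

/-- A finite weighted multigraph (resistive electrical network): finitely many
vertices and edges; each edge `e` has two endpoints `ends e` and a positive
length (resistance) `len e`.  Multiple edges and self-loops are allowed. -/
structure WMG where
  V : Type
  E : Type
  instV : Fintype V
  instE : Fintype E
  ends : E → V × V
  len : E → ℝ
  len_pos : ∀ e, 0 < len e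

attribute [instance] WMG.instV WMG.instE

/-- The Moore–Penrose pseudoinverse of a real square matrix, characterized by
the four Penrose equations (it exists and is unique for real matrices). -/
noncomputable def Matrix.mpinv {n : Type} [Fintype n] (A : Matrix n n ℝ) : Matrix n n ℝ :=
  if h : ∃ B : Matrix n n ℝ,
      A * B * A = A ∧ B * A * B = B ∧ Matrix.transpose (A * B) = A * B ∧ Matrix.transpose (B * A) = B * A
  then h.choose else 0

namespace WMG

/-- Indicator function. -/
noncomputable def ind {α : Type} (x y : α) : ℝ := if x = y then 1 else 0

/-- The weighted Laplacian: an edge `e` with endpoints `a, b` contributes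
`(1/len e) * (δ_{ua} - δ_{ub}) * (δ_{va} - δ_{vb})` to the `(u,v)` entry.  So
the off-diagonal `(u,v)` entry is `-∑ 1/len e` over the edges joining `u` and
`v`, and all row sums are zero. -/
noncomputable def lap (G : WMG) : Matrix G.V G.V ℝ :=
  ∑ e : G.E, (G.len e)⁻¹ •
    Matrix.of (fun u v : G.V =>
      (ind u (G.ends e).1 - ind u (G.ends e).2) *
      (ind v (G.ends e).1 - ind v (G.ends e).2))

/-- Effective resistance `r(p,q) = L⁺pp - 2·L⁺pq + L⁺qq`. -/
noncomputable def res (G : WMG) (p q : G.V) : ℝ :=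
  G.lap.mpinv p p - 2 * G.lap.mpinv p q + G.lap.mpinv q q

/-- Voltage function `j_p(q,s) = L⁺pp - L⁺pq - L⁺ps + L⁺qs`. -/
noncomputable def volt (G : WMG) (p q s : G.V) : ℝ :=
  G.lap.mpinv p p - G.lap.mpinv p q - G.lap.mpinv p s + G.lap.mpinv q s

/-- Two vertices are adjacent if some edge has them as its endpoints. -/
def Adj (G : WMG) (u v : G.V) : Prop :=
  ∃ e : G.E, G.ends e = (u, v) ∨ G.ends e = (v, u)

/-- `u` and `v` are joined by a walk in `G`. -/
def Reach (G : WMG) (u v : G.V) : Prop := Relation.ReflTransGen G.Adj u v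

/-- `G` is connected. -/
def Connected (G : WMG) : Prop := Nonempty G.V ∧ ∀ u v : G.V, G.Reach u v

/-- Quotient graph: identify vertices along (the equivalence generated by) the
relation `r`; all edges are kept. -/
noncomputable def quot (G : WMG) (r : G.V → G.V → Prop) : WMG where
  V := Quot r
  E := G.E
  instV := Fintype.ofFinite _
  instE := G.instE
  ends e := (Quot.mk r (G.ends e).1, Quot.mk r (G.ends e).2)
  len := G.len
  len_pos := G.len_pos

/-- The canonical map from the vertices of `G` to those of a quotient of `G`. -/
def quotMap (G : WMG) (r : G.V → G.V → Prop) : G.V → (G.quot r).V := Quot.mk r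

/-- `G_{pq}`: identify the vertices `p` and `q`. -/
noncomputable def ident2 (G : WMG) (p q : G.V) : WMG :=
  G.quot (fun x y => x = p ∧ y = q)

def ident2Map (G : WMG) (p q : G.V) : G.V → (G.ident2 p q).V :=
  G.quotMap _

/-- `G_{pqs}`: identify the vertices `p`, `q`, `s` into a single vertex. -/
noncomputable def ident3 (G : WMG) (p q s : G.V) : WMG :=
  G.quot (fun x y => (x = p ∧ y = q) ∨ (x = p ∧ y = s))

/-- `G_{pq,st}`: identify `p` with `q` and, separately, `s` with `t`. -/
noncomputable def ident22 (G : WMG) (p q s t : G.V) : WMG :=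
  G.quot (fun x y => (x = p ∧ y = q) ∨ (x = s ∧ y = t))

/-- `G_S`: identify all vertices in the set `S` into a single vertex. -/
noncomputable def identSet (G : WMG) (S : Set G.V) : WMG :=
  G.quot (fun x y => x ∈ S ∧ y ∈ S)

/-- `G − e`: delete the edge `e` (keeping all vertices). -/
noncomputable def delete (G : WMG) (e : G.E) : WMG where
  V := G.V
  E := {f : G.E // f ≠ e}
  instV := G.instV
  instE := Fintype.ofFinite _
  ends f := G.ends f.1
  len f := G.len f.1
  len_pos f := G.len_pos f.1

/-- `e` is a bridge if `G − e` is disconnected. -/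
def IsBridge (G : WMG) (e : G.E) : Prop := ¬ (G.delete e).Connected

/-- `Ḡ_e`: contract the edge `e` (identify its endpoints and delete it). -/
noncomputable def contract (G : WMG) (e : G.E) : WMG :=
  (G.delete e).quot (fun x y => x = (G.ends e).1 ∧ y = (G.ends e).2)

def contractMap (G : WMG) (e : G.E) : G.V → (G.contract e).V := Quot.mk _

/-- Replace the length of the edge `e` by `L'`. -/
noncomputable def setLen (G : WMG) (e : G.E) (L' : ℝ) (hL' : 0 < L') : WMG where
  V := G.V
  E := G.E
  instV := G.instV
  instE := G.instE
  ends := G.ends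
  len f := if f = e then L' else G.len f
  len_pos f := by
    by_cases hf : f = e
    · simpa [hf] using hL'
    · simpa [hf] using G.len_pos f

/-- `T` is (the edge set of) a spanning tree of `G`: using only edges of `T`
any two vertices are joined, and `T` has (number of vertices) − 1 edges. -/
def IsSpanningTree (G : WMG) (T : Finset G.E) : Prop :=
  (∀ u v : G.V, Relation.ReflTransGen
      (fun x y => ∃ e ∈ T, G.ends e = (x, y) ∨ G.ends e = (y, x)) u v) ∧
  T.card = Fintype.card G.V - 1

/-- `t G`: the number of spanning trees of `G` (equals `1` for a one-vertex
graph; self-loops contribute nothing). -/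
noncomputable def t (G : WMG) : ℕ := Nat.card {T : Finset G.E // G.IsSpanningTree T}

/-- `t(G_{pq})`, with the convention `t(G_{pp}) = 0`. -/
noncomputable def t2 (G : WMG) (p q : G.V) : ℕ :=
  if p = q then 0 else (G.ident2 p q).t

/-- Disjoint union of two graphs. -/
noncomputable def disjUnion (G₁ G₂ : WMG) : WMG where
  V := G₁.V ⊕ G₂.V
  E := G₁.E ⊕ G₂.E
  instV := inferInstance
  instE := inferInstance
  ends := Sum.elim (fun e => (Sum.inl (G₁.ends e).1, Sum.inl (G₁.ends e).2))
                   (fun e => (Sum.inr (G₂.ends e).1, Sum.inr (G₂.ends e).2))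
  len := Sum.elim G₁.len G₂.len
  len_pos := by
    rintro (e | e)
    · exact G₁.len_pos e
    · exact G₂.len_pos e

/-- Glue `G₁` and `G₂` along two pairs of vertices (`p₁ ↔ p₂`, `q₁ ↔ q₂`):
the result is the graph `G = G₁ ∪ G₂` with `G₁ ∩ G₂ = {p, q}` (the two pieces
share exactly these two vertices and no edges). -/
noncomputable def glue2 (G₁ G₂ : WMG) (p₁ q₁ : G₁.V) (p₂ q₂ : G₂.V) : WMG :=
  (G₁.disjUnion G₂).quot (fun x y =>
    (x = Sum.inl p₁ ∧ y = Sum.inr p₂) ∨ (x = Sum.inl q₁ ∧ y = Sum.inr q₂))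

/-- Glue `G₁` and `G₂` along three pairs of vertices: the result is the graph
`G = G₁ ∪ G₂` with `G₁ ∩ G₂ = {p, q, s}`. -/
noncomputable def glue3 (G₁ G₂ : WMG) (p₁ q₁ s₁ : G₁.V) (p₂ q₂ s₂ : G₂.V) : WMG :=
  (G₁.disjUnion G₂).quot (fun x y =>
    (x = Sum.inl p₁ ∧ y = Sum.inr p₂) ∨ (x = Sum.inl q₁ ∧ y = Sum.inr q₂) ∨
    (x = Sum.inl s₁ ∧ y = Sum.inr s₂))

/-- Disjoint union of a finite family of graphs. -/
noncomputable def sigmaGraph {k : ℕ} (G : Fin k → WMG) : WMG where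
  V := Σ i, (G i).V
  E := Σ i, (G i).E
  instV := inferInstance
  instE := inferInstance
  ends e := (⟨e.1, ((G e.1).ends e.2).1⟩, ⟨e.1, ((G e.1).ends e.2).2⟩)
  len e := (G e.1).len e.2
  len_pos e := (G e.1).len_pos e.2

/-- Glue the family `G i` along a common pair of vertices (all the `p i` are
identified together, and all the `q i` are identified together): the result is
`G = ⋃ G_i` with `G_i ∩ G_j = {p, q}` for all `i ≠ j`. -/
noncomputable def glueFam {k : ℕ} (G : Fin k → WMG) (p q : ∀ i, (G i).V) : WMG :=
  (sigmaGraph G).quot (fun x y =>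
    (∃ i j, x = ⟨i, p i⟩ ∧ y = ⟨j, p j⟩) ∨ (∃ i j, x = ⟨i, q i⟩ ∧ y = ⟨j, q j⟩))

/-- The cyclic successor on `Fin k`. -/
def finSucc {k : ℕ} (i : Fin k) : Fin k :=
  ⟨(i.1 + 1) % k, Nat.mod_lt _ (Nat.lt_of_le_of_lt (Nat.zero_le _) i.2)⟩

/-- `CG_k`: replace the `i`-th edge of the cycle `C_k` by the graph `G i`,
identifying `t i` (of `G i`) with `s (i+1)` (of `G (i+1)`), cyclically. -/
noncomputable def cycleGlue {k : ℕ} (G : Fin k → WMG) (s t : ∀ i, (G i).V) : WMG :=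
  (sigmaGraph G).quot (fun x y =>
    ∃ i, x = ⟨i, t i⟩ ∧ y = ⟨finSucc i, s (finSucc i)⟩)

/-- Join a new vertex `u` (the vertex `none`) to the vertex `p i` of `H` by
`a i` parallel unit edges, for each `i`.  The resulting graph `G` has `H = G − u`,
and if `p` is injective with all `a i ≥ 1` then `N_G(u) = {p 1, …, p n}` with
`a i` parallel edges joining `u` to `p i`. -/
noncomputable def cone (H : WMG) {n : ℕ} (p : Fin n → H.V) (a : Fin n → ℕ) : WMG where
  V := Option H.V
  E := H.E ⊕ (Σ i : Fin n, Fin (a i))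
  instV := inferInstance
  instE := inferInstance
  ends := Sum.elim (fun e => (some (H.ends e).1, some (H.ends e).2))
                   (fun e => (none, some (p e.1)))
  len := Sum.elim H.len (fun _ => 1)
  len_pos := by
    rintro (e | e)
    · exact H.len_pos e
    · exact one_pos

/-- The path graph `P_n` on `n` vertices `0, 1, …, n-1`, unit edge lengths. -/
noncomputable def path (n : ℕ) : WMG where
  V := Fin n
  E := Fin (n - 1)
  instV := inferInstance
  instE := inferInstance
  ends i := (⟨i.1, by have := i.2; omega⟩, ⟨i.1 + 1, by have := i.2; omega⟩)
  len _ := 1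
  len_pos _ := one_pos

/-- The cycle graph `C_n` on `n` vertices, unit edge lengths. -/
noncomputable def cycle (n : ℕ) : WMG where
  V := Fin n
  E := Fin n
  instV := inferInstance
  instE := inferInstance
  ends i := (i, finSucc i)
  len _ := 1
  len_pos _ := one_pos

/-- The modified fan graph `F̄an_n`: the path `P_n` together with one new hub
vertex joined to each path vertex by `a` parallel edges. -/
noncomputable def fanGraph (n a : ℕ) : WMG :=
  (path n).cone (fun i : Fin n => i) (fun _ => a)

/-- The modified wheel graph `W̄_n`: the cycle `C_n` together with one new hub
vertex joined to each cycle vertex by `a` parallel edges. -/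
noncomputable def wheelGraph (n a : ℕ) : WMG :=
  (cycle n).cone (fun i : Fin n => i) (fun _ => a)

end WMG

/-- The Morgan–Voyce polynomial `B_m(x) = ∑_{k=0}^m C(m+k+1, m−k) x^k`. -/
noncomputable def morganVoyce (m : ℕ) (x : ℝ) : ℝ :=
  ∑ k ∈ Finset.range (m + 1), (Nat.choose (m + k + 1) (m - k) : ℝ) * x ^ k

/-- The polynomial `W_m(x) = ∑_{k=0}^m ((2m+2)/(m+2+k)) C(m+2+k, m−k) x^k`. -/
noncomputable def wheelPoly (m : ℕ) (x : ℝ) : ℝ :=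
  ∑ k ∈ Finset.range (m + 1),
    ((2 * m + 2 : ℝ) / (m + 2 + k : ℝ)) * (Nat.choose (m + 2 + k) (m - k) : ℝ) * x ^ k

/-- The Lucas numbers: `L₀ = 2`, `L₁ = 1`, `L_{m+2} = L_m + L_{m+1}`
(so `L₂ = 3`). -/
def lucas : ℕ → ℕ
  | 0 => 2
  | 1 => 1
  | n + 2 => lucas n + lucas (n + 1)

/-!
For connected `G`, `L⁺ = (L + P)⁻¹ - P` with `P` the averaging projection, so with the dipoles
`χ_ab = e_a - e_b` one has `j_a(b,c) = χ_abᵀ L⁺ χ_ac` and `r(p,q) = χ_pqᵀ L⁺ χ_pq`. The Laplacian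
of `G_pq` is `S L Sᵀ`, where `S` sums a vector over the fibres of `G → G_pq`. For `y` of sum zero,
`w = L⁺y - (χ_pqᵀ L⁺ y / r(p,q)) L⁺χ_pq` has `w(p) = w(q)`, so it is the pullback `Sᵀw'` of a
potential `w'` on `G_pq` with `L_pq w' = S y`. Hence `(Sx)ᵀ L_pq⁺ (Sy) = xᵀw`, the rank-one
correction of `xᵀ L⁺ y`; taking `x = χ_ut`, `y = χ_us` gives the identity.
-/

open Matrix

namespace Matrix

section Penrose

variable {n : Type} [Fintype n]

/- Penrose's uniqueness argument: two Moore–Penrose inverses `X`, `Y` of `A` both equal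
`X * A * Y`. -/
theorem eq_mul_mul_of_penrose_left {A X Y : Matrix n n ℝ} (hX : X * A * X = X)
    (hAX : (A * X)ᵀ = A * X) (hY : A * Y * A = A) (hAY : (A * Y)ᵀ = A * Y) : X = X * A * Y :=
  calc X = X * (A * X)ᵀ := by rw [hAX, ← Matrix.mul_assoc, hX]
    _ = X * Xᵀ * (A * Y * A)ᵀ := by rw [hY, transpose_mul, Matrix.mul_assoc]
    _ = X * (A * X)ᵀ * (A * Y) := by
      rw [transpose_mul (A * Y) A, hAY, transpose_mul A X]
      simp only [Matrix.mul_assoc]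
    _ = X * A * Y := by rw [hAX, ← Matrix.mul_assoc X A X, hX, Matrix.mul_assoc]

theorem eq_mul_mul_of_penrose_right {A X Y : Matrix n n ℝ} (hY : Y * A * Y = Y)
    (hYA : (Y * A)ᵀ = Y * A) (hX : A * X * A = A) (hXA : (X * A)ᵀ = X * A) : Y = X * A * Y :=
  calc Y = (Y * A)ᵀ * Y := by rw [hYA, hY]
    _ = (A * X * A)ᵀ * Yᵀ * Y := by rw [hX, transpose_mul]
    _ = X * A * (Y * A)ᵀ * Y := by
      rw [Matrix.mul_assoc A X A, transpose_mul A (X * A), hXA, transpose_mul Y A]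
      simp only [Matrix.mul_assoc]
    _ = X * A * Y := by rw [hYA, Matrix.mul_assoc (X * A), hY]

theorem mpinv_eq_of_penrose {A B : Matrix n n ℝ} (h₁ : A * B * A = A) (h₂ : B * A * B = B)
    (h₃ : (A * B)ᵀ = A * B) (h₄ : (B * A)ᵀ = B * A) : A.mpinv = B := by
  have hex : ∃ C : Matrix n n ℝ,
      A * C * A = A ∧ C * A * C = C ∧ (A * C)ᵀ = A * C ∧ (C * A)ᵀ = C * A :=
    ⟨B, h₁, h₂, h₃, h₄⟩
  obtain ⟨c₁, c₂, c₃, c₄⟩ := hex.choose_spec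
  rw [mpinv, dif_pos hex]
  exact (eq_mul_mul_of_penrose_left c₂ c₃ h₁ h₃).trans
    (eq_mul_mul_of_penrose_right h₂ h₄ c₁ c₄).symm

variable {A P : Matrix n n ℝ}

theorem mul_eq_zero_of_isSymm (hA : A.IsSymm) (hP : P.IsSymm) (hAP : A * P = 0) :
    P * A = 0 := by
  rw [← hA.eq, ← hP.eq, ← transpose_mul, hAP, transpose_zero]

theorem mul_inv_add_of_mul_eq_zero (hPP : P * P = P) (hPA : P * A = 0)
    (hU : IsUnit (A + P).det) : P * (A + P)⁻¹ = P :=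
  calc P * (A + P)⁻¹ = P * (A + P) * (A + P)⁻¹ := by rw [Matrix.mul_add, hPA, hPP, zero_add]
    _ = P := mul_nonsing_inv_cancel_right _ _ hU

theorem isSymm_inv_add_sub (hA : A.IsSymm) (hP : P.IsSymm) : ((A + P)⁻¹ - P).IsSymm := by
  rw [IsSymm, transpose_sub, transpose_nonsing_inv, (hA.add hP).eq, hP.eq]

theorem mul_inv_add_sub (hA : A.IsSymm) (hP : P.IsSymm) (hPP : P * P = P) (hAP : A * P = 0)
    (hU : IsUnit (A + P).det) : A * ((A + P)⁻¹ - P) = 1 - P :=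
  calc A * ((A + P)⁻¹ - P) = (A + P) * (A + P)⁻¹ - P * (A + P)⁻¹ := by
        rw [Matrix.mul_sub, hAP, sub_zero, Matrix.add_mul, add_sub_cancel_right]
    _ = 1 - P := by
        rw [mul_nonsing_inv _ hU, mul_inv_add_of_mul_eq_zero hPP (mul_eq_zero_of_isSymm hA hP hAP) hU]

theorem mpinv_eq_inv_add_sub (hA : A.IsSymm) (hP : P.IsSymm) (hPP : P * P = P)
    (hAP : A * P = 0) (hU : IsUnit (A + P).det) : A.mpinv = (A + P)⁻¹ - P := by
  set B := (A + P)⁻¹ - P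
  have hB : B.IsSymm := isSymm_inv_add_sub hA hP
  have hAB : A * B = 1 - P := mul_inv_add_sub hA hP hPP hAP hU
  have hBA : B * A = 1 - P := by
    rw [← hA.eq, ← hB.eq, ← transpose_mul, hAB, transpose_sub, transpose_one, hP.eq]
  have hPA : P * A = 0 := mul_eq_zero_of_isSymm hA hP hAP
  have hPB : P * B = 0 := by
    rw [Matrix.mul_sub, mul_inv_add_of_mul_eq_zero hPP hPA hU, hPP, sub_self]
  apply mpinv_eq_of_penrose
  · rw [hAB, Matrix.sub_mul, Matrix.one_mul, hPA, sub_zero]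
  · rw [hBA, Matrix.sub_mul, Matrix.one_mul, hPB, sub_zero]
  · rw [hAB, transpose_sub, transpose_one, hP.eq]
  · rw [hBA, transpose_sub, transpose_one, hP.eq]

end Penrose

section

variable {n : Type*} [Fintype n]

theorem IsSymm.dotProduct_mulVec_comm {A : Matrix n n ℝ} (hA : A.IsSymm) (v w : n → ℝ) :
    v ⬝ᵥ (A *ᵥ w) = (A *ᵥ v) ⬝ᵥ w := by
  rw [dotProduct_mulVec, ← vecMul_transpose, hA.eq]

noncomputable def meanProj (n : Type*) [Fintype n] : Matrix n n ℝ :=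
  of fun _ _ => (Fintype.card n : ℝ)⁻¹

theorem isSymm_meanProj : (meanProj n).IsSymm := rfl

theorem meanProj_mulVec (x : n → ℝ) :
    meanProj n *ᵥ x = fun _ => (Fintype.card n : ℝ)⁻¹ * ∑ i, x i := by
  ext; simp [meanProj, mulVec, dotProduct, Finset.mul_sum]

theorem meanProj_mul_self [Nonempty n] : meanProj n * meanProj n = meanProj n := by
  ext i j
  simp [meanProj, mul_apply]

noncomputable def pushforward {m : Type*} (f : n → m) : Matrix m n ℝ :=
  of fun b a => (Pi.single (f a) 1 : m → ℝ) b

theorem pushforward_mulVec_single {m : Type*} (f : n → m) (a : n) :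
    pushforward f *ᵥ Pi.single a 1 = Pi.single (f a) 1 := by
  rw [mulVec_single_one]; rfl

theorem sum_pushforward_mulVec {m : Type*} [Fintype m] (f : n → m) (x : n → ℝ) :
    ∑ b, (pushforward f *ᵥ x) b = ∑ a, x a := by
  simp only [pushforward, mulVec, dotProduct, of_apply]
  rw [Finset.sum_comm]
  simp [Pi.single_apply]

end

theorem transpose_pushforward_mulVec {k m : Type*} [Fintype m] (f : k → m) (g : m → ℝ) :
    (pushforward f)ᵀ *ᵥ g = g ∘ f := by
  ext a
  simp [pushforward, mulVec, dotProduct, Pi.single_apply]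

end Matrix

namespace WMG

noncomputable def dipole {α : Type*} (a b : α) : α → ℝ := Pi.single a 1 - Pi.single b 1

theorem dipole_self {α : Type*} (a : α) : dipole a a = 0 := sub_self _

theorem dipole_sub_dipole {α : Type*} (a b c : α) : dipole a b - dipole a c = dipole c b := by
  simp only [dipole]; abel

theorem dipole_swap {α : Type*} (a b : α) : dipole b a = -dipole a b := by
  simp only [dipole]; abel

section

variable {α : Type*} [Fintype α]

theorem dipole_dotProduct (a b : α) (x : α → ℝ) : dipole a b ⬝ᵥ x = x a - x b := by
  simp [dipole, sub_dotProduct]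

theorem sum_dipole (a b : α) : ∑ v, dipole a b v = 0 := by
  simp [dipole]

theorem pushforward_mulVec_dipole {β : Type*} (f : α → β) (a b : α) :
    pushforward f *ᵥ dipole a b = dipole (f a) (f b) := by
  rw [dipole, mulVec_sub, pushforward_mulVec_single, pushforward_mulVec_single, dipole]

end

variable (G : WMG)

theorem lap_eq_sum : G.lap = ∑ e, (G.len e)⁻¹ •
    vecMulVec (dipole (G.ends e).1 (G.ends e).2) (dipole (G.ends e).1 (G.ends e).2) := by
  unfold lap
  congr! 3 with e
  ext u v
  simp [vecMulVec, dipole, ind, Pi.single_apply]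

theorem lap_isSymm : G.lap.IsSymm := by
  rw [IsSymm, lap_eq_sum, transpose_sum]
  simp only [transpose_smul, transpose_vecMulVec]

theorem lap_mulVec (x : G.V → ℝ) : G.lap *ᵥ x =
    ∑ e, ((G.len e)⁻¹ * (x (G.ends e).1 - x (G.ends e).2)) • dipole (G.ends e).1 (G.ends e).2 := by
  rw [lap_eq_sum, sum_mulVec]
  refine Finset.sum_congr rfl fun e _ => ?_
  rw [smul_mulVec, vecMulVec_mulVec, op_smul_eq_smul, dipole_dotProduct, mul_smul]

theorem dotProduct_lap_mulVec (x : G.V → ℝ) : x ⬝ᵥ (G.lap *ᵥ x) =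
    ∑ e, (G.len e)⁻¹ * (x (G.ends e).1 - x (G.ends e).2) ^ 2 := by
  rw [lap_mulVec, dotProduct_sum]
  refine Finset.sum_congr rfl fun e _ => ?_
  rw [dotProduct_smul, dotProduct_comm, dipole_dotProduct, smul_eq_mul]
  ring

theorem dotProduct_lap_mulVec_nonneg (x : G.V → ℝ) : 0 ≤ x ⬝ᵥ (G.lap *ᵥ x) := by
  rw [dotProduct_lap_mulVec]
  exact Finset.sum_nonneg fun e _ => mul_nonneg (inv_nonneg.mpr (G.len_pos e).le) (sq_nonneg _)

theorem lap_mulVec_const (c : ℝ) : G.lap *ᵥ (fun _ => c) = 0 := by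
  simp [lap_mulVec]

theorem lap_mul_meanProj : G.lap * meanProj G.V = 0 := by
  ext u v
  exact congrFun (G.lap_mulVec_const _) u

theorem eq_of_dotProduct_lap_mulVec_eq_zero (hG : G.Connected) {x : G.V → ℝ}
    (hx : x ⬝ᵥ (G.lap *ᵥ x) = 0) (u v : G.V) : x u = x v := by
  have hedge (e : G.E) : x (G.ends e).1 = x (G.ends e).2 := by
    rw [dotProduct_lap_mulVec, Finset.sum_eq_zero_iff_of_nonneg fun e _ =>
      mul_nonneg (inv_nonneg.mpr (G.len_pos e).le) (sq_nonneg _)] at hx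
    have := hx e (Finset.mem_univ e)
    rw [mul_eq_zero, inv_eq_zero, sq_eq_zero_iff, sub_eq_zero] at this
    exact this.resolve_left (G.len_pos e).ne'
  have hadj (a b : G.V) : G.Adj a b → x a = x b := by
    rintro ⟨e, he | he⟩ <;> have h := hedge e <;> rw [he] at h
    exacts [h, h.symm]
  induction hG.2 u v with
  | refl => rfl
  | tail _ hab ih => exact ih.trans (hadj _ _ hab)

theorem isUnit_det_lap_add_meanProj (hG : G.Connected) :
    IsUnit (G.lap + meanProj G.V).det := by
  obtain ⟨u₀⟩ := hG.1
  have : Nonempty G.V := ⟨u₀⟩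
  rw [isUnit_iff_ne_zero, Ne, ← exists_mulVec_eq_zero_iff]
  rintro ⟨x, hx0, hx⟩
  have hP : meanProj G.V *ᵥ x = 0 := by
    have := congrArg (meanProj G.V *ᵥ ·) hx
    simpa only [mulVec_mulVec, Matrix.mul_add, meanProj_mul_self,
      mul_eq_zero_of_isSymm G.lap_isSymm isSymm_meanProj G.lap_mul_meanProj, zero_add,
      mulVec_zero] using this
  have hL : G.lap *ᵥ x = 0 := by rwa [add_mulVec, hP, add_zero] at hx
  have hconst := G.eq_of_dotProduct_lap_mulVec_eq_zero hG (by rw [hL, dotProduct_zero])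
  have hmean := congrFun hP u₀
  simp only [meanProj_mulVec, Finset.sum_congr rfl fun w _ => hconst w u₀, Finset.sum_const,
    Finset.card_univ, nsmul_eq_mul, Pi.zero_apply] at hmean
  rw [inv_mul_cancel_left₀ (by exact_mod_cast Fintype.card_ne_zero)] at hmean
  exact hx0 (funext fun v => (hconst v u₀).trans hmean)

theorem mpinv_lap (hG : G.Connected) :
    G.lap.mpinv = (G.lap + meanProj G.V)⁻¹ - meanProj G.V :=
  have : Nonempty G.V := hG.1
  mpinv_eq_inv_add_sub G.lap_isSymm isSymm_meanProj meanProj_mul_self G.lap_mul_meanProj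
    (G.isUnit_det_lap_add_meanProj hG)

theorem isSymm_mpinv_lap (hG : G.Connected) : G.lap.mpinv.IsSymm := by
  rw [G.mpinv_lap hG]
  exact isSymm_inv_add_sub G.lap_isSymm isSymm_meanProj

theorem lap_mulVec_mpinv_mulVec (hG : G.Connected) {y : G.V → ℝ} (hy : ∑ v, y v = 0) :
    G.lap *ᵥ (G.lap.mpinv *ᵥ y) = y := by
  have : Nonempty G.V := hG.1
  rw [mulVec_mulVec, G.mpinv_lap hG, mul_inv_add_sub G.lap_isSymm isSymm_meanProj
    meanProj_mul_self G.lap_mul_meanProj (G.isUnit_det_lap_add_meanProj hG), sub_mulVec,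
    one_mulVec, meanProj_mulVec, hy, mul_zero]
  exact sub_zero y

theorem volt_eq_dotProduct (hG : G.Connected) (a b c : G.V) :
    G.volt a b c = dipole a b ⬝ᵥ (G.lap.mpinv *ᵥ dipole a c) := by
  rw [dipole_dotProduct, dipole, mulVec_sub, mulVec_single_one, mulVec_single_one, volt]
  simp only [Pi.sub_apply, col_apply, (G.isSymm_mpinv_lap hG).apply b a]
  ring

theorem res_eq_volt (p q : G.V) : G.res p q = G.volt p q q := by
  rw [res, volt]; ring

theorem volt_sub_volt (hG : G.Connected) (p q t u : G.V) :
    G.volt p q u - G.volt p q t = dipole p q ⬝ᵥ (G.lap.mpinv *ᵥ dipole t u) := by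
  rw [volt_eq_dotProduct G hG, volt_eq_dotProduct G hG, ← dotProduct_sub, ← mulVec_sub,
    dipole_sub_dipole]

theorem res_pos (hG : G.Connected) {p q : G.V} (hpq : p ≠ q) : 0 < G.res p q := by
  set z := G.lap.mpinv *ᵥ dipole p q
  have hLz : G.lap *ᵥ z = dipole p q := G.lap_mulVec_mpinv_mulVec hG (sum_dipole p q)
  have hres : G.res p q = z ⬝ᵥ (G.lap *ᵥ z) := by
    rw [res_eq_volt, volt_eq_dotProduct G hG, hLz, dotProduct_comm]
  rw [hres]
  refine (G.dotProduct_lap_mulVec_nonneg z).lt_of_ne fun h => ?_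
  have hz : z = fun _ => z p :=
    funext fun v => G.eq_of_dotProduct_lap_mulVec_eq_zero hG h.symm v p
  have := congrFun hLz p
  rw [hz, lap_mulVec_const] at this
  simp [dipole, hpq] at this

theorem quot_connected (r : G.V → G.V → Prop) (hG : G.Connected) : (G.quot r).Connected := by
  refine ⟨hG.1.map (G.quotMap r), fun a b => ?_⟩
  obtain ⟨u, rfl⟩ := Quot.exists_rep a
  obtain ⟨v, rfl⟩ := Quot.exists_rep b
  refine (hG.2 u v).lift (G.quotMap r) fun x y ⟨e, he⟩ => ⟨e, he.imp ?_ ?_⟩ <;>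
    exact congrArg (Prod.map (G.quotMap r) (G.quotMap r))

theorem lap_quot (r : G.V → G.V → Prop) :
    (G.quot r).lap = pushforward (G.quotMap r) * G.lap * (pushforward (G.quotMap r))ᵀ := by
  rw [lap_eq_sum, lap_eq_sum, Matrix.mul_sum, Matrix.sum_mul]
  refine Finset.sum_congr rfl fun e _ => ?_
  rw [Matrix.mul_smul, Matrix.smul_mul, mul_vecMulVec, vecMulVec_mul, vecMul_transpose,
    pushforward_mulVec_dipole]
  rfl

theorem dotProduct_mpinv_ident2 (hG : G.Connected) {p q : G.V} (hpq : p ≠ q)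
    {x y : G.V → ℝ} (hx : ∑ v, x v = 0) (hy : ∑ v, y v = 0) :
    (pushforward (G.ident2Map p q) *ᵥ x) ⬝ᵥ
        ((G.ident2 p q).lap.mpinv *ᵥ (pushforward (G.ident2Map p q) *ᵥ y)) =
      x ⬝ᵥ (G.lap.mpinv *ᵥ y) -
        (dipole p q ⬝ᵥ (G.lap.mpinv *ᵥ x)) * (dipole p q ⬝ᵥ (G.lap.mpinv *ᵥ y)) / G.res p q := by
  set K := G.lap.mpinv
  set S := pushforward (G.ident2Map p q)
  have hH : (G.ident2 p q).Connected := G.quot_connected _ hG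
  have hLH : (G.ident2 p q).lap = S * G.lap * Sᵀ := G.lap_quot _
  set c := (dipole p q ⬝ᵥ (K *ᵥ y)) / G.res p q
  set w := K *ᵥ y - c • (K *ᵥ dipole p q)
  have hw : w p = w q := by
    have hχw : dipole p q ⬝ᵥ w = 0 := by
      rw [dotProduct_sub, dotProduct_smul, smul_eq_mul, ← volt_eq_dotProduct G hG, ← res_eq_volt,
        div_mul_cancel₀ _ (G.res_pos hG hpq).ne', sub_self]
    rwa [dipole_dotProduct, sub_eq_zero] at hχw
  set w' : (G.ident2 p q).V → ℝ := Quot.lift w (by rintro _ _ ⟨rfl, rfl⟩; exact hw)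
  have hw' : Sᵀ *ᵥ w' = w := transpose_pushforward_mulVec (G.ident2Map p q) w'
  have hLw' : (G.ident2 p q).lap *ᵥ w' = S *ᵥ y := by
    have hLw : G.lap *ᵥ w = y - c • dipole p q := by
      rw [mulVec_sub, mulVec_smul, G.lap_mulVec_mpinv_mulVec hG hy,
        G.lap_mulVec_mpinv_mulVec hG (sum_dipole p q)]
    have hpq' : G.ident2Map p q p = G.ident2Map p q q := Quot.sound ⟨rfl, rfl⟩
    rw [hLH, ← mulVec_mulVec, ← mulVec_mulVec, hw', hLw, mulVec_sub, mulVec_smul,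
      pushforward_mulVec_dipole, hpq', dipole_self, smul_zero, sub_zero]
  calc (S *ᵥ x) ⬝ᵥ ((G.ident2 p q).lap.mpinv *ᵥ (S *ᵥ y))
      = ((G.ident2 p q).lap *ᵥ ((G.ident2 p q).lap.mpinv *ᵥ (S *ᵥ x))) ⬝ᵥ w' := by
        rw [← hLw', ((G.ident2 p q).isSymm_mpinv_lap hH).dotProduct_mulVec_comm,
          (G.ident2 p q).lap_isSymm.dotProduct_mulVec_comm]
    _ = x ⬝ᵥ w := by
        rw [(G.ident2 p q).lap_mulVec_mpinv_mulVec hH ((sum_pushforward_mulVec _ x).trans hx),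
          ← hw', dotProduct_mulVec, vecMul_transpose]
    _ = _ := by
        rw [dotProduct_sub, dotProduct_smul, smul_eq_mul,
          (G.isSymm_mpinv_lap hG).dotProduct_mulVec_comm x (dipole p q),
          dotProduct_comm _ (dipole p q)]
        ring

end WMG

/-- For a finite connected weighted graph `G` and vertices `p ≠ q`, `s`, `t`, `u`:
`j_u(t,s) = j_u^{G_{pq}}(t,s) + (1/r(p,q)) (j_p(q,u) - j_p(q,t)) (j_p(q,u) - j_p(q,s))`. -/
theorem volt_of_two_vertex_identification (G : WMG) (hG : G.Connected)
    (p q s t u : G.V) (hpq : p ≠ q) :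
    G.volt u t s =
      (G.ident2 p q).volt (G.ident2Map p q u) (G.ident2Map p q t) (G.ident2Map p q s) +
        (1 / G.res p q) *
          ((G.volt p q u - G.volt p q t) * (G.volt p q u - G.volt p q s)) := by
  rw [G.volt_eq_dotProduct hG, (G.ident2 p q).volt_eq_dotProduct (G.quot_connected _ hG),
    ← WMG.pushforward_mulVec_dipole, ← WMG.pushforward_mulVec_dipole,
    G.dotProduct_mpinv_ident2 hG hpq (WMG.sum_dipole u t) (WMG.sum_dipole u s),
    G.volt_sub_volt hG, G.volt_sub_volt hG, WMG.dipole_swap t u, WMG.dipole_swap s u]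
  simp only [mulVec_neg, dotProduct_neg]
  ring
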